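/- If M is a doubly stochastic d×d matrix and x ∈ ℝ^d, then M x is majorised by x. Conversely (Hardy–Littlewood–Pólya), if y ≺ x then there exists a doubly stochastic M with y = M x. -/

import Mathlib

/-! Both directions pass through the convex hull `K` of the permutations `x ∘ σ` of `x`.
By Birkhoff's theorem the doubly stochastic matrices are the convex hull of the permutation
matrices, so `{M x | M doubly stochastic} = K`. The sum of the `k` largest entries is the largest
sum over a set of `k` coordinates, hence convex, so `{y | y ≺ x}` is convex and contains `K`.
Conversely, if `y ≺ x` lay outside `K`, some linear functional `c` would separate them; but the
rearrangement inequality and Abel summation against the partial sums of the sorted entries give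
`⟪c, y⟫ ≤ ⟪c↓, y↓⟫ ≤ ⟪c↓, x↓⟫`, and `⟪c↓, x↓⟫ = ⟪c, x ∘ σ⟫` for a suitable `σ`. -/

open Finset Matrix

/-- The entries of `x` sorted in decreasing order. -/
noncomputable def sortDesc {n : ℕ} (x : Fin n → ℝ) : Fin n → ℝ :=
  fun i => x (Tuple.sort x i.rev)

/-- Sum of the `k` largest entries of `x`. -/
noncomputable def topSum {n : ℕ} (x : Fin n → ℝ) (k : ℕ) : ℝ :=
  ∑ i ∈ Finset.univ.filter (fun i : Fin n => (i : ℕ) < k), sortDesc x i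

/-- `y ≺ x`: `y` is majorised by `x`. -/
def Majorizes {n : ℕ} (y x : Fin n → ℝ) : Prop :=
  (∀ k : ℕ, topSum y k ≤ topSum x k) ∧ (∑ i, y i = ∑ i, x i)

/-- A doubly stochastic matrix: nonnegative entries, all row and column sums equal `1`. -/
def DoublyStochastic {n : ℕ} (M : Matrix (Fin n) (Fin n) ℝ) : Prop :=
  (∀ i j, 0 ≤ M i j) ∧ (∀ i, ∑ j, M i j = 1) ∧ (∀ j, ∑ i, M i j = 1)

section

variable {n : ℕ}

noncomputable def sortEquiv (z : Fin n → ℝ) : Equiv.Perm (Fin n) :=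
  Fin.revPerm.trans (Tuple.sort z)

lemma sortDesc_apply (z : Fin n → ℝ) (i : Fin n) : sortDesc z i = z (sortEquiv z i) := rfl

lemma sortDesc_antitone (z : Fin n → ℝ) : Antitone (sortDesc z) :=
  fun _ _ hij => Tuple.monotone_sort z (Fin.rev_le_rev.mpr hij)

lemma sortDesc_comp_perm (z : Fin n → ℝ) (σ : Equiv.Perm (Fin n)) :
    sortDesc (z ∘ σ) = sortDesc z := by
  ext i
  exact congrFun (Tuple.comp_perm_comp_sort_eq_comp_sort (f := z) (σ := σ)) i.rev

lemma sum_sortDesc (z : Fin n → ℝ) : ∑ i, sortDesc z i = ∑ i, z i :=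
  Equiv.sum_comp (sortEquiv z) z

lemma sum_mul_le_sum_sortDesc_mul (c z : Fin n → ℝ) :
    ∑ i, c i * z i ≤ ∑ i, sortDesc c i * sortDesc z i := by
  have hperm : ∑ i, c i * z i
      = ∑ i, sortDesc c i * sortDesc z ((sortEquiv c).trans (sortEquiv z).symm i) := by
    rw [← Equiv.sum_comp (sortEquiv c)]
    simp [sortDesc_apply]
  rw [hperm]
  exact ((sortDesc_antitone c).monovary (sortDesc_antitone z)).sum_smul_comp_perm_le_sum_smul

lemma sortDesc_indicator (S : Finset (Fin n)) (i : Fin n) :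
    sortDesc (fun j => if j ∈ S then (1 : ℝ) else 0) i = if (i : ℕ) < #S then 1 else 0 := by
  set e := sortDesc fun j => if j ∈ S then (1 : ℝ) else 0 with he
  have hcard : #{j | (1 : ℝ) ≤ e j} = #S := by
    rw [← S.card_map (sortEquiv fun j => if j ∈ S then (1 : ℝ) else 0).symm.toEmbedding]
    congr 1
    ext j
    simp only [he, sortDesc_apply, mem_filter, mem_univ, true_and, mem_map_equiv, Equiv.symm_symm]
    split_ifs <;> norm_num [*]
  have key := Tuple.lt_card_ge_iff_apply_ge_of_antitone (j := i) (a := (1 : ℝ))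
    (sortDesc_antitone fun j => if j ∈ S then (1 : ℝ) else 0)
  rw [← he, hcard] at key
  simp only [he, sortDesc_apply] at key ⊢
  split_ifs at key ⊢ <;> norm_num at key ⊢ <;> omega

lemma sum_le_topSum (z : Fin n → ℝ) {S : Finset (Fin n)} {k : ℕ} (hS : #S = min n k) :
    ∑ i ∈ S, z i ≤ topSum z k := by
  calc ∑ i ∈ S, z i = ∑ i, (if i ∈ S then (1 : ℝ) else 0) * z i := by
        simp [ite_mul]
    _ ≤ ∑ i, sortDesc (fun j => if j ∈ S then (1 : ℝ) else 0) i * sortDesc z i :=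
        sum_mul_le_sum_sortDesc_mul _ _
    _ = topSum z k := by
        simp only [sortDesc_indicator, hS, ite_mul, one_mul, zero_mul, topSum, sum_filter]
        refine sum_congr rfl fun i _ => if_congr ?_ rfl rfl
        have := i.isLt
        omega

lemma exists_card_eq_topSum_eq_sum (z : Fin n → ℝ) (k : ℕ) :
    ∃ S : Finset (Fin n), #S = min n k ∧ topSum z k = ∑ i ∈ S, z i :=
  ⟨(univ.filter fun i : Fin n => (i : ℕ) < k).map (sortEquiv z).toEmbedding,
    by simp [Fin.card_filter_val_lt], by simp [topSum, sortDesc_apply]⟩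

lemma convex_setOf_majorizes (x : Fin n → ℝ) : Convex ℝ {y | Majorizes y x} := by
  rintro y₁ ⟨h₁, hs₁⟩ y₂ ⟨h₂, hs₂⟩ a b ha hb hab
  refine ⟨fun k => ?_, ?_⟩
  · obtain ⟨S, hS, hsum⟩ := exists_card_eq_topSum_eq_sum (a • y₁ + b • y₂) k
    calc topSum (a • y₁ + b • y₂) k = a * ∑ i ∈ S, y₁ i + b * ∑ i ∈ S, y₂ i := by
          simp [hsum, sum_add_distrib, mul_sum]
      _ ≤ a * topSum x k + b * topSum x k := by
          gcongr
          · exact (sum_le_topSum y₁ hS).trans (h₁ k)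
          · exact (sum_le_topSum y₂ hS).trans (h₂ k)
      _ = topSum x k := by rw [← add_mul, hab, one_mul]
  · simp [sum_add_distrib, ← mul_sum, hs₁, hs₂, ← add_mul, hab]

lemma majorizes_comp_perm (x : Fin n → ℝ) (σ : Equiv.Perm (Fin n)) : Majorizes (x ∘ σ) x :=
  ⟨fun k => by simp [topSum, sortDesc_comp_perm], Equiv.sum_comp σ x⟩

lemma majorizes_of_mem_convexHull {x y : Fin n → ℝ}
    (hy : y ∈ convexHull ℝ (Set.range fun σ : Equiv.Perm (Fin n) => x ∘ σ)) : Majorizes y x :=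
  convexHull_min (Set.range_subset_iff.2 (majorizes_comp_perm x)) (convex_setOf_majorizes x) hy

lemma sum_mul_nonneg_of_antitone_of_prefixSum_nonneg :
    ∀ {n : ℕ} {c d : Fin n → ℝ}, Antitone c → (∀ i, 0 ≤ c i) →
      (∀ k, 0 ≤ ∑ i ∈ univ.filter (fun i : Fin n => (i : ℕ) < k), d i) → 0 ≤ ∑ i, c i * d i
  | 0, _, _, _, _, _ => by simp
  | n + 1, c, d, hc, hc₀, hd => by
    have hprefix : ∀ k, ∑ i ∈ univ.filter (fun i : Fin n => (i : ℕ) < k), d i.castSucc =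
        ∑ i ∈ univ.filter (fun i : Fin (n + 1) => (i : ℕ) < min k n), d i := by
      intro k
      rw [sum_filter, sum_filter, Fin.sum_univ_castSucc]
      simp
    have hsplit : ∑ i, c i * d i = ∑ i : Fin n, (c i.castSucc - c (Fin.last n)) * d i.castSucc
        + c (Fin.last n) * ∑ i, d i := by
      simp only [Fin.sum_univ_castSucc, sub_mul, sum_sub_distrib, ← mul_sum]
      ring
    have htotal : 0 ≤ ∑ i, d i := by simpa [Fin.is_le] using hd (n + 1)
    rw [hsplit]
    refine add_nonneg (sum_mul_nonneg_of_antitone_of_prefixSum_nonneg ?_ ?_ ?_)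
      (mul_nonneg (hc₀ _) htotal)
    · exact fun i j hij => sub_le_sub_right (hc (Fin.castSucc_le_castSucc_iff.2 hij)) _
    · exact fun i => sub_nonneg.2 (hc (Fin.le_last _))
    · exact fun k => (hprefix k).symm ▸ hd _

lemma sum_mul_sortDesc_le_of_majorizes {c x y : Fin n → ℝ} (hc : Antitone c)
    (h : Majorizes y x) : ∑ i, c i * sortDesc y i ≤ ∑ i, c i * sortDesc x i := by
  -- shifting `c` by a lower bound `m` changes nothing, since `x↓ - y↓` sums to zero
  obtain ⟨m, hm⟩ := (Set.finite_range c).bddBelow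
  have key := sum_mul_nonneg_of_antitone_of_prefixSum_nonneg (c := fun i => c i - m)
    (d := fun i => sortDesc x i - sortDesc y i) (fun i j hij => sub_le_sub_right (hc hij) m)
    (fun i => sub_nonneg.2 (hm ⟨i, rfl⟩)) (fun k => by simpa [sum_sub_distrib, topSum] using h.1 k)
  have htotal : ∑ i, sortDesc y i = ∑ i, sortDesc x i := by simpa [sum_sortDesc] using h.2
  simp only [sub_mul, mul_sub, sum_sub_distrib, ← mul_sum, htotal] at key
  linarith

lemma exists_perm_sum_mul_le_of_majorizes (c : Fin n → ℝ) {x y : Fin n → ℝ}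
    (h : Majorizes y x) : ∃ σ : Equiv.Perm (Fin n), ∑ i, c i * y i ≤ ∑ i, c i * x (σ i) := by
  refine ⟨(sortEquiv c).symm.trans (sortEquiv x), ?_⟩
  calc ∑ i, c i * y i ≤ ∑ i, sortDesc c i * sortDesc y i := sum_mul_le_sum_sortDesc_mul c y
    _ ≤ ∑ i, sortDesc c i * sortDesc x i :=
        sum_mul_sortDesc_le_of_majorizes (sortDesc_antitone c) h
    _ = _ := by
        symm
        rw [← Equiv.sum_comp (sortEquiv c)]
        simp [sortDesc_apply]

lemma mem_convexHull_of_majorizes {x y : Fin n → ℝ} (h : Majorizes y x) :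
    y ∈ convexHull ℝ (Set.range fun σ : Equiv.Perm (Fin n) => x ∘ σ) := by
  by_contra hy
  obtain ⟨f, u, hfu, huy⟩ := geometric_hahn_banach_closed_point (convex_convexHull ℝ _)
    ((Set.finite_range _).isClosed_convexHull (𝕜 := ℝ)) hy
  set c : Fin n → ℝ := fun i => f fun j => if i = j then 1 else 0
  have hf : ∀ v, f v = ∑ i, c i * v i := fun v => by
    simpa [mul_comm] using LinearMap.pi_apply_eq_sum_univ (f : (Fin n → ℝ) →ₗ[ℝ] ℝ) v
  obtain ⟨σ, hσ⟩ := exists_perm_sum_mul_le_of_majorizes c h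
  have hσu := hfu (x ∘ σ) (subset_convexHull ℝ _ ⟨σ, rfl⟩)
  rw [hf] at hσu huy
  simp only [Function.comp_apply] at hσu
  linarith

lemma image_mulVec_doublyStochastic {R ι : Type*} [Field R] [LinearOrder R]
    [IsStrictOrderedRing R] [Fintype ι] [DecidableEq ι] (x : ι → R) :
    (· *ᵥ x) '' (doublyStochastic R ι : Set (Matrix ι ι R)) =
      convexHull R (Set.range fun σ : Equiv.Perm ι => x ∘ σ) := by
  have hlin : IsLinearMap R fun M : Matrix ι ι R => M *ᵥ x :=
    ⟨fun A B => add_mulVec A B x, fun r A => smul_mulVec r A x⟩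
  rw [doublyStochastic_eq_convexHull_permMatrix, hlin.image_convexHull]
  congr 1
  ext v
  simp [permMatrix_mulVec]

lemma majorizes_iff_mem_convexHull {x y : Fin n → ℝ} :
    Majorizes y x ↔ y ∈ convexHull ℝ (Set.range fun σ : Equiv.Perm (Fin n) => x ∘ σ) :=
  ⟨mem_convexHull_of_majorizes, majorizes_of_mem_convexHull⟩

lemma doublyStochastic_iff_mem_doublyStochastic {M : Matrix (Fin n) (Fin n) ℝ} :
    DoublyStochastic M ↔ M ∈ doublyStochastic ℝ (Fin n) :=
  mem_doublyStochastic_iff_sum.symm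

end

/-- `Mx ≺ x` for doubly stochastic `M`; conversely (Hardy–Littlewood–Pólya), `y ≺ x` iff
`y = Mx` for some doubly stochastic `M`. -/
theorem doublyStochastic_majorisation {n : ℕ} :
    (∀ (M : Matrix (Fin n) (Fin n) ℝ) (x : Fin n → ℝ),
      DoublyStochastic M → Majorizes (M.mulVec x) x) ∧
    (∀ x y : Fin n → ℝ, Majorizes y x →
      ∃ M : Matrix (Fin n) (Fin n) ℝ, DoublyStochastic M ∧ y = M.mulVec x) := by
  refine ⟨fun M x hM => ?_, fun x y h => ?_⟩
  · rw [majorizes_iff_mem_convexHull, ← image_mulVec_doublyStochastic]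
    exact ⟨M, doublyStochastic_iff_mem_doublyStochastic.1 hM, rfl⟩
  · rw [majorizes_iff_mem_convexHull, ← image_mulVec_doublyStochastic] at h
    obtain ⟨M, hM, rfl⟩ := h
    exact ⟨M, doublyStochastic_iff_mem_doublyStochastic.2 hM, rfl⟩
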